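/- arXiv:1010.6111 — 4 statements merged into one kernel-verified Lean document; each statement's English description precedes it below -/
import Mathlib

section
/- Let (α_n)_{n≥1} and (β_n)_{n≥1} be sequences of real numbers. If α_n ≥ 0 for all n, (α_n) is nondecreasing with α_n → ∞, and the series Σ_{n=1}^∞ α_n β_n converges, then for all sufficiently large N the tail series Σ_{n=N}^∞ β_n converges, and α_N · Σ_{n=N}^∞ β_n → 0 as N → ∞. -/
/-!
Write `β n = (α n)⁻¹ * (α n * β n)`. Once `α` is positive the weights `(α n)⁻¹` are nonnegative
and nonincreasing, so Abel's inequality bounds `|∑_{N ≤ n < M} β n|` by `(α N)⁻¹` times the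
largest partial sum of `∑_{n ≥ N} α n β n`, which is small for large `N` by the Cauchy criterion.
This gives both the convergence of `∑ β n` and `|α N * ∑_{n ≥ N} β n| → 0`.
-/

open Filter Finset

theorem Finset.sum_Ico_smul_by_parts {R M : Type*} [Ring R] [AddCommGroup M] [Module R M]
    (c : ℕ → R) (a : ℕ → M) (N K : ℕ) :
    ∑ n ∈ Ico N K, c n • a n =
      ∑ n ∈ Ico N K, (c n - c (n + 1)) • ∑ i ∈ Ico N (n + 1), a i
        + c K • ∑ i ∈ Ico N K, a i := by
  induction K with
  | zero => simp
  | succ K ih =>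
    rcases le_or_gt N K with hNK | hKN
    · simp only [sum_Ico_succ_top hNK, ih, sub_smul, smul_add]
      abel
    · simp [Ico_eq_empty_of_le (Nat.succ_le_of_lt hKN)]

/-- **Abel's inequality**. -/
theorem norm_sum_Ico_smul_le_of_antitoneOn {E : Type*} [SeminormedAddCommGroup E]
    [NormedSpace ℝ E] {c : ℕ → ℝ} {a : ℕ → E} {N : ℕ} {ε : ℝ}
    (hc : AntitoneOn c (Set.Ici N)) (hc0 : ∀ n ≥ N, 0 ≤ c n)
    (ha : ∀ k, ‖∑ i ∈ Ico N k, a i‖ ≤ ε) (K : ℕ) :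
    ‖∑ n ∈ Ico N K, c n • a n‖ ≤ c N * ε := by
  have hε : 0 ≤ ε := (norm_nonneg _).trans (ha 0)
  rcases le_or_gt N K with hNK | hKN
  swap
  · simpa [Ico_eq_empty_of_le hKN.le] using mul_nonneg (hc0 N le_rfl) hε
  have hstep : ∀ n ∈ Ico N K, 0 ≤ c n - c (n + 1) := fun n hn =>
    sub_nonneg.2 <| hc (Set.mem_Ici.2 (mem_Ico.1 hn).1)
      (Set.mem_Ici.2 ((mem_Ico.1 hn).1.trans n.le_succ)) n.le_succ
  have htelescope : ∑ n ∈ Ico N K, (c n - c (n + 1)) = c N - c K := by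
    rw [← neg_sub, ← sum_Ico_sub c hNK, ← sum_neg_distrib]
    simp only [neg_sub]
  rw [sum_Ico_smul_by_parts]
  calc ‖∑ n ∈ Ico N K, (c n - c (n + 1)) • ∑ i ∈ Ico N (n + 1), a i
          + c K • ∑ i ∈ Ico N K, a i‖
      ≤ ∑ n ∈ Ico N K, (c n - c (n + 1)) * ε + c K * ε := by
        refine (norm_add_le _ _).trans (add_le_add ?_ ?_)
        · refine (norm_sum_le _ _).trans (sum_le_sum fun n hn => ?_)
          rw [norm_smul, Real.norm_of_nonneg (hstep n hn)]
          exact mul_le_mul_of_nonneg_left (ha _) (hstep n hn)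
        · rw [norm_smul, Real.norm_of_nonneg (hc0 K hNK)]
          exact mul_le_mul_of_nonneg_left (ha K) (hc0 K hNK)
    _ = c N * ε := by rw [← sum_mul, htelescope]; ring

theorem cauchySeq_sum_range_iff_eventually_norm_sum_Ico_le {E : Type*}
    [SeminormedAddCommGroup E] {a : ℕ → E} :
    CauchySeq (fun n => ∑ i ∈ range n, a i) ↔
      ∀ ε > 0, ∀ᶠ N in atTop, ∀ K, ‖∑ i ∈ Ico N K, a i‖ ≤ ε := by
  have hdist : ∀ {N K}, N ≤ K →
      dist (∑ i ∈ range K, a i) (∑ i ∈ range N, a i) = ‖∑ i ∈ Ico N K, a i‖ := fun h => by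
    rw [dist_eq_norm, sum_Ico_eq_sub _ h]
  constructor
  · intro h ε hε
    obtain ⟨N₀, hN₀⟩ := Metric.cauchySeq_iff.1 h ε hε
    filter_upwards [eventually_ge_atTop N₀] with N hN K
    rcases le_or_gt N K with hNK | hKN
    · exact (hdist hNK ▸ hN₀ K (hN.trans hNK) N hN).le
    · simpa [Ico_eq_empty_of_le hKN.le] using hε.le
  · intro h
    refine Metric.cauchySeq_iff'.2 fun ε hε => ?_
    obtain ⟨N, hN⟩ := (h (ε / 2) (half_pos hε)).exists
    exact ⟨N, fun K hK => hdist hK ▸ (hN K).trans_lt (half_lt_self hε)⟩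

theorem tendsto_sum_Ico_of_tendsto_sum_range {E : Type*} [AddCommGroup E] [TopologicalSpace E]
    [IsTopologicalAddGroup E] {a : ℕ → E} {s : E}
    (h : Tendsto (fun n => ∑ i ∈ range n, a i) atTop (nhds s)) (N : ℕ) :
    Tendsto (fun K => ∑ i ∈ Ico N K, a i) atTop (nhds (s - ∑ i ∈ range N, a i)) :=
  (h.sub_const _).congr' <| (eventually_ge_atTop N).mono fun _ hK => (sum_Ico_eq_sub _ hK).symm

theorem eventually_forall_abs_mul_sum_Ico_le {α β : ℕ → ℝ} (hmono : Monotone α)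
    (hatop : Tendsto α atTop atTop) (hαβ : CauchySeq fun n => ∑ i ∈ range n, α i * β i)
    {ε : ℝ} (hε : 0 < ε) :
    ∀ᶠ N in atTop, ∀ K, |α N * ∑ n ∈ Ico N K, β n| ≤ ε := by
  obtain ⟨N₀, hpos⟩ := eventually_atTop.1 (hatop.eventually_gt_atTop 0)
  filter_upwards [eventually_ge_atTop N₀,
    cauchySeq_sum_range_iff_eventually_norm_sum_Ico_le.1 hαβ ε hε] with N hN hsmall K
  have hαN := hpos N hN
  have habel := norm_sum_Ico_smul_le_of_antitoneOn (c := fun n => (α n)⁻¹) (K := K)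
    (fun m hm n _ hmn => inv_anti₀ (hpos m (hN.trans hm)) (hmono hmn))
    (fun n hn => (inv_pos.2 (hpos n (hN.trans hn))).le) hsmall
  have hβ : ∑ n ∈ Ico N K, β n = ∑ n ∈ Ico N K, (α n)⁻¹ • (α n * β n) :=
    sum_congr rfl fun n hn =>
      (inv_mul_cancel_left₀ (hpos n (hN.trans (mem_Ico.1 hn).1)).ne' _).symm
  rw [abs_mul, abs_of_pos hαN, hβ, ← Real.norm_eq_abs]
  calc α N * ‖∑ n ∈ Ico N K, (α n)⁻¹ • (α n * β n)‖ ≤ α N * ((α N)⁻¹ * ε) :=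
        mul_le_mul_of_nonneg_left habel hαN.le
    _ = ε := mul_inv_cancel_left₀ hαN.ne' ε

theorem abel_tail_estimate_general (α β : ℕ → ℝ)
    (hmono : Monotone α) (hatop : Tendsto α atTop atTop)
    (hconv : ∃ l : ℝ,
      Tendsto (fun N : ℕ => ∑ n ∈ Finset.range N, α n * β n) atTop (nhds l)) :
    ∃ t : ℕ → ℝ,
      (∀ᶠ N : ℕ in atTop,
        Tendsto (fun M : ℕ => ∑ n ∈ Finset.Ico N M, β n) atTop (nhds (t N))) ∧
      Tendsto (fun N : ℕ => α N * t N) atTop (nhds 0) := by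
  obtain ⟨l, hl⟩ := hconv
  have hsmall := fun ε (hε : 0 < ε) =>
    eventually_forall_abs_mul_sum_Ico_le hmono hatop hl.cauchySeq hε
  have hβ : CauchySeq fun n => ∑ i ∈ range n, β i := by
    refine cauchySeq_sum_range_iff_eventually_norm_sum_Ico_le.2 fun ε hε => ?_
    filter_upwards [hsmall ε hε, hatop.eventually_ge_atTop 1] with N hN hαN K
    calc ‖∑ n ∈ Ico N K, β n‖ ≤ α N * |∑ n ∈ Ico N K, β n| :=
          le_mul_of_one_le_left (abs_nonneg _) hαN
      _ ≤ ε := by simpa [abs_mul, abs_of_nonneg (zero_le_one.trans hαN)] using hN K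
  obtain ⟨s, hs⟩ := cauchySeq_tendsto_of_complete hβ
  have htail := tendsto_sum_Ico_of_tendsto_sum_range hs
  refine ⟨fun N => s - ∑ i ∈ range N, β i, .of_forall htail, ?_⟩
  refine Metric.nhds_basis_closedBall.tendsto_right_iff.2 fun ε hε => ?_
  filter_upwards [hsmall ε hε] with N hN
  simpa using le_of_tendsto ((htail N).const_mul (α N)).abs (.of_forall hN)

/-- **Lemma 2.3(i) (Asmussen).** If `α_n ≥ 0`, `α_n ↑ ∞` and `Σ α_n β_n` converges,
then for all sufficiently large `N` the tail series `Σ_{n ≥ N} β_n` converges, and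
`α_N · Σ_{n ≥ N} β_n → 0` as `N → ∞`. -/
theorem abel_tail_estimate (α β : ℕ → ℝ)
    (hα0 : ∀ n, 0 ≤ α n) (hmono : Monotone α) (hatop : Tendsto α atTop atTop)
    (hconv : ∃ l : ℝ,
      Tendsto (fun N : ℕ => ∑ n ∈ Finset.range N, α n * β n) atTop (nhds l)) :
    ∃ t : ℕ → ℝ,
      (∀ᶠ N : ℕ in atTop,
        Tendsto (fun M : ℕ => ∑ n ∈ Finset.Ico N M, β n) atTop (nhds (t N))) ∧
      Tendsto (fun N : ℕ => α N * t N) atTop (nhds 0) :=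
  abel_tail_estimate_general α β hmono hatop hconv
end

section
/- Let (a_n)_{n≥0} be a sequence of real numbers with a_n ≥ 0, (a_n) nondecreasing and a_n → ∞, and let (W_n)_{n≥0} be a sequence of random variables converging almost surely to a random variable W. If the series Σ_n a_n·(W_{n+1} − W_n) converges almost surely, then a_n·(W − W_n) → 0 almost surely as n → ∞. -/
/-!
The claim is pathwise. Fix `ω`, write `w n = W n ω` and `b k = a k * (w (k + 1) - w k)`.
For `n ≤ m` with `a n > 0`, `a n * (w m - w n) = ∑_{n ≤ k < m} (a n / a k) * b k`, and the
weights `a n / a k` are nonincreasing in `k` with first value `1`; by Abel's inequality the sum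
is bounded by the largest partial sum `|∑_{n ≤ k < j} b k|`, `j ≤ m`, which is small for large
`n` since the series converges. Letting `m → ∞` bounds `|a n * (Wlim ω - w n)|` by the same
quantity.
-/

open MeasureTheory Filter Topology Finset

theorem sum_Ico_mul_eq_mul_add_sum_sub_mul (b c : ℕ → ℝ) {n m : ℕ} (hnm : n ≤ m) :
    ∑ k ∈ Ico n m, c k * b k =
      c m * ∑ i ∈ Ico n m, b i +
        ∑ k ∈ Ico n m, (c k - c (k + 1)) * ∑ i ∈ Ico n (k + 1), b i := by
  induction m, hnm using Nat.le_induction with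
  | base => simp
  | succ m hnm ih =>
    simp only [sum_Ico_succ_top hnm, ih]
    ring

theorem abs_sum_Ico_mul_le_of_antitoneOn (b c : ℕ → ℝ) {n m : ℕ} (hnm : n ≤ m) {E : ℝ}
    (hc : AntitoneOn c (Set.Icc n m)) (hcm : 0 ≤ c m)
    (hB : ∀ j ∈ Set.Icc n m, |∑ i ∈ Ico n j, b i| ≤ E) :
    |∑ k ∈ Ico n m, c k * b k| ≤ c n * E := by
  have hstep : ∀ k ∈ Ico n m, 0 ≤ c k - c (k + 1) := fun k hk => by
    rw [mem_Ico] at hk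
    exact sub_nonneg.2 (hc ⟨hk.1, hk.2.le⟩ ⟨hk.1.trans k.le_succ, hk.2⟩ k.le_succ)
  have htelescope : ∑ k ∈ Ico n m, (c k - c (k + 1)) = c n - c m := by
    rw [← neg_sub (c m), ← sum_Ico_sub c hnm, ← sum_neg_distrib]
    simp only [neg_sub]
  rw [sum_Ico_mul_eq_mul_add_sum_sub_mul b c hnm]
  calc _ ≤ |c m * ∑ i ∈ Ico n m, b i|
          + ∑ k ∈ Ico n m, |(c k - c (k + 1)) * ∑ i ∈ Ico n (k + 1), b i| :=
        (abs_add_le _ _).trans (add_le_add le_rfl (abs_sum_le_sum_abs _ _))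
    _ ≤ c m * E + ∑ k ∈ Ico n m, (c k - c (k + 1)) * E := by
        gcongr with k hk
        · rw [abs_mul, abs_of_nonneg hcm]
          exact mul_le_mul_of_nonneg_left (hB m ⟨hnm, le_rfl⟩) hcm
        · rw [abs_mul, abs_of_nonneg (hstep k hk)]
          have hk' := mem_Ico.1 hk
          exact mul_le_mul_of_nonneg_left (hB (k + 1) ⟨by omega, hk'.2⟩) (hstep k hk)
    _ = c n * E := by rw [← sum_mul, htelescope]; ring

theorem abs_mul_sub_le_of_abs_sum_mul_sub_le {a w : ℕ → ℝ} (ha : Monotone a) {n m : ℕ}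
    (hnm : n ≤ m) (han : 0 < a n) {E : ℝ}
    (hE : ∀ j ∈ Set.Icc n m, |∑ i ∈ Ico n j, a i * (w (i + 1) - w i)| ≤ E) :
    |a n * (w m - w n)| ≤ E := by
  have hpos : ∀ k, n ≤ k → 0 < a k := fun k hk => han.trans_le (ha hk)
  have hweights : AntitoneOn (fun k => a n / a k) (Set.Icc n m) := fun i hi _ _ hij =>
    div_le_div_of_nonneg_left han.le (hpos i hi.1) (ha hij)
  have hsum : a n * (w m - w n) = ∑ k ∈ Ico n m, a n / a k * (a k * (w (k + 1) - w k)) := by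
    rw [← sum_Ico_sub w hnm, mul_sum]
    refine sum_congr rfl fun k hk => ?_
    field_simp [(hpos k (mem_Ico.1 hk).1).ne']
  rw [hsum]
  simpa [div_self han.ne'] using abs_sum_Ico_mul_le_of_antitoneOn _ _ hnm hweights
    (div_nonneg han.le (hpos m hnm).le) hE

theorem tendsto_mul_sub_of_cauchySeq_sum_mul_sub {a w : ℕ → ℝ} {L : ℝ} (ha : Monotone a)
    (hpos : ∀ᶠ n in atTop, 0 < a n) (hw : Tendsto w atTop (𝓝 L))
    (hS : CauchySeq fun N => ∑ n ∈ range N, a n * (w (n + 1) - w n)) :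
    Tendsto (fun n => a n * (L - w n)) atTop (𝓝 0) := by
  rw [Metric.tendsto_atTop]
  intro ε hε
  obtain ⟨N₀, hN₀⟩ := Metric.cauchySeq_iff.1 hS (ε / 2) (half_pos hε)
  obtain ⟨N₁, hN₁⟩ := eventually_atTop.1 hpos
  refine ⟨max N₀ N₁, fun n hn => ?_⟩
  have hsmall : ∀ m ≥ n, |a n * (w m - w n)| ≤ ε / 2 := fun m hm =>
    abs_mul_sub_le_of_abs_sum_mul_sub_le ha hm (hN₁ n (le_of_max_le_right hn)) fun j hj => by
      rw [sum_Ico_eq_sub _ hj.1, ← Real.dist_eq]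
      exact (hN₀ j ((le_of_max_le_left hn).trans hj.1) n (le_of_max_le_left hn)).le
  have hlim : |a n * (L - w n)| ≤ ε / 2 :=
    le_of_tendsto ((hw.sub_const _).const_mul _).abs (eventually_atTop.2 ⟨n, hsmall⟩)
  rw [dist_zero_right, Real.norm_eq_abs]
  linarith

theorem rate_from_weighted_series_general
    {Ω : Type*} [MeasurableSpace Ω] (μ : Measure Ω)
    (a : ℕ → ℝ) (hmono : Monotone a) (hatop : Tendsto a atTop atTop)
    (W : ℕ → Ω → ℝ) (Wlim : Ω → ℝ)
    (hconv : ∀ᵐ ω ∂μ, Tendsto (fun n => W n ω) atTop (nhds (Wlim ω)))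
    (hser : ∀ᵐ ω ∂μ, ∃ l : ℝ,
      Tendsto (fun N : ℕ => ∑ n ∈ Finset.range N, a n * (W (n + 1) ω - W n ω))
        atTop (nhds l)) :
    ∀ᵐ ω ∂μ, Tendsto (fun n : ℕ => a n * (Wlim ω - W n ω)) atTop (nhds 0) := by
  filter_upwards [hconv, hser] with ω hω ⟨l, hl⟩
  exact tendsto_mul_sub_of_cauchySeq_sum_mul_sub hmono (hatop.eventually_gt_atTop 0) hω
    hl.cauchySeq

/-- **Lemma 2.4 (Huang–Liu).** If `a_n ≥ 0`, `(a_n)` is nondecreasing with `a_n → ∞`,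
`W_n → W` a.s., and the series `Σ_n a_n (W_{n+1} − W_n)` converges a.s., then
`a_n (W − W_n) → 0` a.s. -/
theorem rate_from_weighted_series
    {Ω : Type*} [MeasurableSpace Ω] (μ : Measure Ω) [IsProbabilityMeasure μ]
    (a : ℕ → ℝ) (ha0 : ∀ n, 0 ≤ a n) (hmono : Monotone a) (hatop : Tendsto a atTop atTop)
    (W : ℕ → Ω → ℝ) (Wlim : Ω → ℝ)
    (hWmeas : ∀ n, Measurable (W n)) (hWlimmeas : Measurable Wlim)
    (hconv : ∀ᵐ ω ∂μ, Tendsto (fun n => W n ω) atTop (nhds (Wlim ω)))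
    (hser : ∀ᵐ ω ∂μ, ∃ l : ℝ,
      Tendsto (fun N : ℕ => ∑ n ∈ Finset.range N, a n * (W (n + 1) ω - W n ω))
        atTop (nhds l)) :
    ∀ᵐ ω ∂μ, Tendsto (fun n : ℕ => a n * (Wlim ω - W n ω)) atTop (nhds 0) :=
  rate_from_weighted_series_general μ a hmono hatop W Wlim hconv hser
end

section
/- Let T be an ergodic measure-preserving transformation of a probability space (Ω, μ), and let α, β : Ω → [0,∞) be measurable functions (so that (α∘T^n, β∘T^n)_{n≥0} is a stationary ergodic sequence of pairs of nonnegative random variables). Assume 𝔼[(log α)⁺] < ∞ with 𝔼[log α] < 0 (the expectation possibly equal to −∞), and 𝔼[(log β)⁺] < ∞. Then Σ_{n=0}^∞ α(ω)·α(Tω)⋯α(T^{n−1}ω)·β(T^nω) < ∞ for μ-almost every ω. -/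
/-!
Replace `log α` by the integrable truncation `f = log (max α e^{-M})`, which still satisfies
`α ≤ e^f` and, for `M` large, `∫ f < 0`. Hopf's maximal ergodic inequality, in Garsia's form,
shows that under ergodicity the Birkhoff sums of an integrable `g` with `∫ g < 0` are a.e.
bounded above; applied to `f - c` this gives `S_n f ≤ C + c n` with `c < 0`. Applied to the part
of `(log β)⁺` above a large level, it also gives `(log β)⁺ (Tⁿ ω) ≤ C' + ε n` for every `ε > 0`.
Hence the `n`-th term of the series is at most `e^{C + C'} e^{(c + ε) n}`, a geometric bound.
-/

open MeasureTheory Filter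
open scoped ENNReal Topology

section BirkhoffSum

variable {Ω : Type*} {T : Ω → Ω}

theorem bddAbove_range_birkhoffSum_apply_iff {M : Type*} [AddCommGroup M] [LinearOrder M]
    [IsOrderedAddMonoid M] (T : Ω → Ω) (g : Ω → M) (x : Ω) :
    BddAbove (Set.range fun n => birkhoffSum T g n (T x)) ↔
      BddAbove (Set.range fun n => birkhoffSum T g n x) := by
  simp only [bddAbove_def, Set.forall_mem_range]
  constructor
  · rintro ⟨C, hC⟩
    refine ⟨max 0 (g x + C), fun n => ?_⟩
    cases n with
    | zero => simp
    | succ n =>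
      exact (birkhoffSum_succ' T g n x).trans_le (le_max_of_le_right (by gcongr; exact hC n))
  · rintro ⟨C, hC⟩
    refine ⟨C - g x, fun n => ?_⟩
    rw [le_sub_iff_add_le']
    exact (birkhoffSum_succ' T g n x).symm.trans_le (hC (n + 1))

theorem prod_le_exp_birkhoffSum {a f : Ω → ℝ} (ha : ∀ x, 0 ≤ a x)
    (haf : ∀ x, a x ≤ Real.exp (f x)) (n : ℕ) (x : Ω) :
    ∏ k ∈ Finset.range n, a (T^[k] x) ≤ Real.exp (birkhoffSum T f n x) := by
  rw [birkhoffSum, Real.exp_sum]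
  exact Finset.prod_le_prod (fun k _ => ha _) (fun k _ => haf _)

variable [MeasurableSpace Ω] {μ : Measure Ω}

theorem Measurable.birkhoffSum {M : Type*} [AddCommMonoid M] [MeasurableSpace M]
    [MeasurableAdd₂ M] {g : Ω → M} (hg : Measurable g) (hT : Measurable T) (n : ℕ) :
    Measurable (birkhoffSum T g n) :=
  Finset.measurable_sum _ fun k _ => hg.comp (hT.iterate k)

theorem MeasureTheory.MeasurePreserving.integrable_birkhoffSum {E : Type*}
    [NormedAddCommGroup E] {g : Ω → E} (hT : MeasurePreserving T μ μ) (hg : Integrable g μ)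
    (n : ℕ) : Integrable (birkhoffSum T g n) μ :=
  integrable_finsetSum _ fun k _ => (hT.iterate k).integrable_comp_of_integrable hg

end BirkhoffSum

section MaximalErgodic

variable {Ω : Type*} {T : Ω → Ω} {g : Ω → ℝ}

/-- Garsia's running maximum `max_{0 ≤ n ≤ N} S_n g x`; it includes the empty sum `S_0 = 0`. -/
def birkhoffMax (T : Ω → Ω) (g : Ω → ℝ) (N : ℕ) (x : Ω) : ℝ :=
  partialSups (fun n => birkhoffSum T g n x) N

theorem birkhoffSum_le_birkhoffMax {n N : ℕ} (h : n ≤ N) (x : Ω) :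
    birkhoffSum T g n x ≤ birkhoffMax T g N x :=
  le_partialSups_of_le (fun n => birkhoffSum T g n x) h

theorem birkhoffMax_nonneg (N : ℕ) (x : Ω) : 0 ≤ birkhoffMax T g N x := by
  simpa using birkhoffSum_le_birkhoffMax (T := T) (g := g) (Nat.zero_le N) x

theorem monotone_birkhoffMax (x : Ω) : Monotone fun N => birkhoffMax T g N x :=
  partialSups_monotone _

theorem birkhoffMax_zero : birkhoffMax T g 0 = 0 :=
  funext fun x => birkhoffSum_zero T g x

theorem birkhoffMax_succ (N : ℕ) :
    birkhoffMax T g (N + 1) = fun x => max (birkhoffMax T g N x) (birkhoffSum T g (N + 1) x) :=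
  funext fun _ => partialSups_succ _ N

theorem exists_birkhoffSum_eq_birkhoffMax (N : ℕ) (x : Ω) :
    ∃ n ≤ N, birkhoffMax T g N x = birkhoffSum T g n x :=
  exists_partialSups_eq _ N

theorem birkhoffMax_le_add_birkhoffMax_apply {N : ℕ} {x : Ω} (hpos : 0 < birkhoffMax T g N x) :
    birkhoffMax T g N x ≤ g x + birkhoffMax T g N (T x) := by
  obtain ⟨_ | n, hn, heq⟩ := exists_birkhoffSum_eq_birkhoffMax (T := T) (g := g) N x
  · simp [heq] at hpos
  · rw [heq, birkhoffSum_succ']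
    gcongr
    exact birkhoffSum_le_birkhoffMax (by omega) _

variable [MeasurableSpace Ω] {μ : Measure Ω}

theorem Measurable.birkhoffMax (hg : Measurable g) (hT : Measurable T) (N : ℕ) :
    Measurable (birkhoffMax T g N) := by
  induction N with
  | zero => simpa only [birkhoffMax_zero] using measurable_zero
  | succ N ih => simpa only [birkhoffMax_succ] using ih.max (hg.birkhoffSum hT (N + 1))

theorem MeasureTheory.MeasurePreserving.integrable_birkhoffMax (hT : MeasurePreserving T μ μ)
    (hg : Integrable g μ) (N : ℕ) : Integrable (birkhoffMax T g N) μ := by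
  induction N with
  | zero => simpa only [birkhoffMax_zero] using integrable_zero Ω ℝ μ
  | succ N ih =>
    rw [birkhoffMax_succ]
    exact ih.sup (hT.integrable_birkhoffSum hg (N + 1))

/-- Garsia: `M_N ≤ g + M_N ∘ T` on `{M_N > 0}`, and `M_N ≥ 0` vanishes off that set. -/
theorem MeasureTheory.MeasurePreserving.setIntegral_birkhoffMax_pos_nonneg
    (hT : MeasurePreserving T μ μ) (hg : Measurable g) (hgi : Integrable g μ) (N : ℕ) :
    0 ≤ ∫ x in {x | 0 < birkhoffMax T g N x}, g x ∂μ := by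
  set M := birkhoffMax T g N
  set E := {x | 0 < M x}
  have hMm : Measurable M := hg.birkhoffMax hT.measurable N
  have hMi : Integrable M μ := hT.integrable_birkhoffMax hgi N
  have hMTi : Integrable (fun x => M (T x)) μ := hT.integrable_comp_of_integrable hMi
  have hE : MeasurableSet E := measurableSet_lt measurable_const hMm
  calc 0 = ∫ x, M x ∂μ - ∫ x, M (T x) ∂μ := by
        rw [← integral_map hT.aemeasurable (hT.map_eq ▸ hMm.aestronglyMeasurable), hT.map_eq,
          sub_self]
    _ = ∫ x in E, M x ∂μ - ∫ x, M (T x) ∂μ := by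
        rw [setIntegral_eq_integral_of_forall_compl_eq_zero (s := E) (f := M) fun x hx =>
          le_antisymm (not_lt.1 hx) (birkhoffMax_nonneg N x)]
    _ ≤ ∫ x in E, M x ∂μ - ∫ x in E, M (T x) ∂μ :=
        sub_le_sub_left
          (setIntegral_le_integral hMTi (.of_forall fun _ => birkhoffMax_nonneg N _)) _
    _ = ∫ x in E, (M x - M (T x)) ∂μ := (integral_sub hMi.integrableOn hMTi.integrableOn).symm
    _ ≤ ∫ x in E, g x ∂μ :=
        setIntegral_mono_on (hMi.sub hMTi).integrableOn hgi.integrableOn hE fun x hx => by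
          linarith [birkhoffMax_le_add_birkhoffMax_apply hx]

theorem MeasureTheory.MeasurePreserving.setIntegral_exists_birkhoffSum_pos_nonneg
    (hT : MeasurePreserving T μ μ) (hg : Measurable g) (hgi : Integrable g μ) :
    0 ≤ ∫ x in {x | ∃ n, 0 < birkhoffSum T g n x}, g x ∂μ := by
  have hunion : {x | ∃ n, 0 < birkhoffSum T g n x} = ⋃ N, {x | 0 < birkhoffMax T g N x} := by
    ext x
    simp only [Set.mem_ofPred_eq, Set.mem_iUnion]
    constructor
    · rintro ⟨n, hn⟩
      exact ⟨n, hn.trans_le (birkhoffSum_le_birkhoffMax le_rfl x)⟩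
    · rintro ⟨N, hN⟩
      obtain ⟨n, -, heq⟩ := exists_birkhoffSum_eq_birkhoffMax (T := T) (g := g) N x
      exact ⟨n, heq ▸ hN⟩
  rw [hunion]
  refine ge_of_tendsto' (tendsto_setIntegral_of_monotone
    (fun N => measurableSet_lt measurable_const (hg.birkhoffMax hT.measurable N))
    (fun N N' h x hx => hx.trans_le (monotone_birkhoffMax x h)) hgi.integrableOn)
    (hT.setIntegral_birkhoffMax_pos_nonneg hg hgi)

end MaximalErgodic

section Ergodic

variable {Ω : Type*} [MeasurableSpace Ω] {μ : Measure Ω} {T : Ω → Ω}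

theorem Ergodic.ae_bddAbove_birkhoffSum {g : Ω → ℝ} (hT : Ergodic T μ) (hg : Measurable g)
    (hgi : Integrable g μ) (hneg : ∫ x, g x ∂μ < 0) :
    ∀ᵐ x ∂μ, BddAbove (Set.range fun n => birkhoffSum T g n x) := by
  set s := {x | BddAbove (Set.range fun n => birkhoffSum T g n x)}
  have hs : MeasurableSet s := measurableSet_bddAbove_range fun n => hg.birkhoffSum hT.measurable n
  have hinv : T ⁻¹' s = s := Set.ext fun x => bddAbove_range_birkhoffSum_apply_iff T g x
  refine (hT.measure_self_or_compl_eq_zero hs hinv).resolve_left fun hnull => hneg.not_ge ?_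
  -- where all Birkhoff sums are `≤ 0` they are bounded, so Hopf's set has full measure
  have hae : ∀ᵐ x ∂μ, x ∈ {x | ∃ n, 0 < birkhoffSum T g n x} := by
    refine measure_mono_null (fun x hx => ?_) hnull
    simp only [Set.mem_compl_iff, Set.mem_ofPred_eq, not_exists, not_lt] at hx
    exact ⟨0, Set.forall_mem_range.2 hx⟩
  have hHopf := hT.toMeasurePreserving.setIntegral_exists_birkhoffSum_pos_nonneg hg hgi
  rwa [Measure.restrict_eq_self_of_ae_mem hae] at hHopf

theorem MeasureTheory.Integrable.exists_integral_max_sub_lt {h : Ω → ℝ} (hh : Integrable h μ)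
    {ε : ℝ} (hε : 0 < ε) : ∃ K : ℝ, ∫ x, max (h x - K) 0 ∂μ < ε := by
  have hlim : Tendsto (fun K : ℕ => ∫ x, max (h x - K) 0 ∂μ) atTop (𝓝 (∫ _, (0 : ℝ) ∂μ)) := by
    refine tendsto_integral_of_dominated_convergence (fun x => |h x|)
      (fun K => (hh.aestronglyMeasurable.sub aestronglyMeasurable_const).sup
        aestronglyMeasurable_const) hh.abs
      (fun K => .of_forall fun x => ?_) (.of_forall fun x => ?_)
    · rw [Real.norm_of_nonneg (le_max_right _ _)]
      exact max_le (by linarith [le_abs_self (h x), K.cast_nonneg (α := ℝ)]) (abs_nonneg _)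
    · refine tendsto_const_nhds.congr' ?_
      filter_upwards [eventually_ge_atTop ⌈h x⌉₊] with K hK
      have : h x ≤ K := (Nat.le_ceil _).trans (by exact_mod_cast hK)
      exact (max_eq_right (by linarith)).symm
  rw [integral_zero] at hlim
  obtain ⟨K, hK⟩ := (hlim.eventually (gt_mem_nhds hε)).exists
  exact ⟨K, hK⟩

variable [IsProbabilityMeasure μ]

theorem Ergodic.ae_exists_birkhoffSum_le {f : Ω → ℝ} (hT : Ergodic T μ) (hf : Measurable f)
    (hfi : Integrable f μ) {c : ℝ} (hc : ∫ x, f x ∂μ < c) :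
    ∀ᵐ x ∂μ, ∃ C, ∀ n : ℕ, birkhoffSum T f n x ≤ C + c * n := by
  have hsub : ∀ n x, birkhoffSum T (fun x => f x - c) n x = birkhoffSum T f n x - c * n := by
    intro n x
    simp [birkhoffSum, Finset.sum_sub_distrib, mul_comm]
  have hneg : ∫ x, (f x - c) ∂μ < 0 := by
    rw [integral_sub hfi (integrable_const c)]
    simpa using hc
  filter_upwards [hT.ae_bddAbove_birkhoffSum (hf.sub_const c) (hfi.sub (integrable_const c)) hneg]
    with x ⟨C, hC⟩
  exact ⟨C, fun n => by linarith [hsub n x, hC (Set.mem_range_self n)]⟩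

theorem Ergodic.ae_exists_apply_iterate_le {h : Ω → ℝ} (hT : Ergodic T μ) (hh : Measurable h)
    (hhi : Integrable h μ) {ε : ℝ} (hε : 0 < ε) :
    ∀ᵐ x ∂μ, ∃ C, ∀ n : ℕ, h (T^[n] x) ≤ C + ε * n := by
  obtain ⟨K, hK⟩ := hhi.exists_integral_max_sub_lt hε
  set t := fun x => max (h x - K) 0
  filter_upwards [hT.ae_exists_birkhoffSum_le ((hh.sub_const K).max measurable_const)
    (hhi.sub (integrable_const K)).pos_part hK] with x ⟨C, hC⟩
  refine ⟨K + C + ε, fun n => ?_⟩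
  have hterm : t (T^[n] x) ≤ birkhoffSum T t (n + 1) x := by
    rw [birkhoffSum_succ]
    exact le_add_of_nonneg_left (Finset.sum_nonneg fun k _ => le_max_right _ _)
  calc h (T^[n] x) ≤ K + t (T^[n] x) := by linarith [le_max_left (h (T^[n] x) - K) 0]
    _ ≤ K + (C + ε * (n + 1 : ℕ)) := by linarith [hC (n + 1)]
    _ = K + C + ε + ε * n := by push_cast; ring

end Ergodic

section TruncLog

/-- `log a` truncated from below at `-M`. For `a ≤ 0`, where the relevant value of `log a` is
`-∞` (unlike `Real.log 0 = 0`), it equals `-M`. -/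
noncomputable def truncLog (M a : ℝ) : ℝ :=
  Real.log (max a (Real.exp (-M)))

theorem le_exp_truncLog (M a : ℝ) : a ≤ Real.exp (truncLog M a) := by
  rw [truncLog, Real.exp_log (lt_max_of_lt_right (Real.exp_pos _))]
  exact le_max_left _ _

theorem truncLog_of_exp_neg_le {M a : ℝ} (h : Real.exp (-M) ≤ a) : truncLog M a = Real.log a := by
  rw [truncLog, max_eq_left h]

theorem truncLog_of_le_exp_neg {M a : ℝ} (h : a ≤ Real.exp (-M)) : truncLog M a = -M := by
  rw [truncLog, max_eq_right h, Real.log_exp]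

theorem neg_le_truncLog (M a : ℝ) : -M ≤ truncLog M a := by
  rw [truncLog, Real.le_log_iff_exp_le (lt_max_of_lt_right (Real.exp_pos _))]
  exact le_max_right _ _

theorem truncLog_le_max_log_zero {M : ℝ} (hM : 0 ≤ M) (a : ℝ) :
    truncLog M a ≤ max (Real.log a) 0 := by
  rcases le_total (Real.exp (-M)) a with h | h
  · exact (truncLog_of_exp_neg_le h).trans_le (le_max_left _ _)
  · rw [truncLog_of_le_exp_neg h]
    exact (neg_nonpos.2 hM).trans (le_max_right _ _)

theorem antitone_truncLog (a : ℝ) : Antitone fun M => truncLog M a := fun _ _ h =>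
  Real.log_le_log (lt_max_of_lt_right (Real.exp_pos _))
    (max_le_max le_rfl (Real.exp_le_exp.2 (neg_le_neg h)))

theorem iSup_ofReal_neg_truncLog_of_nonpos {a : ℝ} (ha : a ≤ 0) :
    ⨆ M : ℕ, ENNReal.ofReal (-truncLog M a) = ∞ := by
  simp only [truncLog_of_le_exp_neg (ha.trans (Real.exp_pos _).le), neg_neg,
    ENNReal.ofReal_natCast, ENNReal.iSup_natCast]

theorem ofReal_neg_log_le_iSup_ofReal_neg_truncLog (a : ℝ) :
    ENNReal.ofReal (-Real.log a) ≤ ⨆ M : ℕ, ENNReal.ofReal (-truncLog M a) := by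
  rcases le_or_gt a 0 with ha | ha
  · rw [iSup_ofReal_neg_truncLog_of_nonpos ha]
    exact le_top
  · obtain ⟨M, hM⟩ := exists_nat_ge (-Real.log a)
    refine le_iSup_of_le M (le_of_eq ?_)
    rw [truncLog_of_exp_neg_le ((Real.exp_le_exp.2 (by linarith)).trans_eq (Real.exp_log ha))]

variable {Ω : Type*} [MeasurableSpace Ω] {μ : Measure Ω} {a : Ω → ℝ}

theorem Measurable.truncLog (ha : Measurable a) (M : ℝ) : Measurable fun x => truncLog M (a x) :=
  Real.measurable_log.comp (ha.max measurable_const)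

theorem exists_lt_lintegral_ofReal_neg_truncLog (ha : Measurable a) {c : ℝ≥0∞} (hc : c ≠ ∞)
    (hneg : μ {x | a x = 0} ≠ 0 ∨ c < ∫⁻ x, ENNReal.ofReal (-Real.log (a x)) ∂μ) :
    ∃ M : ℕ, c < ∫⁻ x, ENNReal.ofReal (-truncLog M (a x)) ∂μ := by
  rw [← lt_iSup_iff, ← lintegral_iSup (f := fun (M : ℕ) x => ENNReal.ofReal (-truncLog M (a x)))
    (fun M => (ha.truncLog M).neg.ennreal_ofReal)
    (fun M M' h x => ENNReal.ofReal_le_ofReal (neg_le_neg (antitone_truncLog _ (by simpa))))]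
  rcases hneg with hzero | hlt
  · calc c < ∞ := hc.lt_top
      _ = ∫⁻ x, {x | a x = 0}.indicator (fun _ => ∞) x ∂μ := by
        rw [lintegral_indicator_const (measurableSet_eq_fun ha measurable_const),
          ENNReal.top_mul hzero]
      _ ≤ _ := lintegral_mono <| Set.indicator_le fun x hx =>
        (iSup_ofReal_neg_truncLog_of_nonpos (le_of_eq hx)).ge
  · exact hlt.trans_le (lintegral_mono fun x => ofReal_neg_log_le_iSup_ofReal_neg_truncLog _)

theorem integrable_max_zero_of_lintegral_ofReal_lt_top {f : Ω → ℝ} (hf : AEMeasurable f μ)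
    (h : ∫⁻ x, ENNReal.ofReal (f x) ∂μ < ∞) : Integrable (fun x => max (f x) 0) μ := by
  simpa only [ENNReal.toReal_ofReal'] using
    integrable_toReal_of_lintegral_ne_top hf.ennreal_ofReal h.ne

theorem exists_integral_truncLog_neg [IsFiniteMeasure μ] (ha : Measurable a)
    (hplus : ∫⁻ x, ENNReal.ofReal (Real.log (a x)) ∂μ < ∞)
    (hneg : μ {x | a x = 0} ≠ 0 ∨
      ∫⁻ x, ENNReal.ofReal (Real.log (a x)) ∂μ < ∫⁻ x, ENNReal.ofReal (-Real.log (a x)) ∂μ) :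
    ∃ M : ℕ, Integrable (fun x => truncLog M (a x)) μ ∧ ∫ x, truncLog M (a x) ∂μ < 0 := by
  obtain ⟨M, hM⟩ := exists_lt_lintegral_ofReal_neg_truncLog ha hplus.ne hneg
  have hle : ∀ x, truncLog M (a x) ≤ max (Real.log (a x)) 0 :=
    fun x => truncLog_le_max_log_zero M.cast_nonneg _
  have hi : Integrable (fun x => truncLog M (a x)) μ :=
    integrable_of_le_of_le
      (ha.truncLog M).aestronglyMeasurable
      (.of_forall fun x => neg_le_truncLog _ _) (.of_forall hle) (integrable_const _)
      (integrable_max_zero_of_lintegral_ofReal_lt_top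
        (Real.measurable_log.comp ha).aemeasurable hplus)
  have hpos : ∫⁻ x, ENNReal.ofReal (truncLog M (a x)) ∂μ ≤
      ∫⁻ x, ENNReal.ofReal (Real.log (a x)) ∂μ :=
    lintegral_mono fun x => ENNReal.ofReal_le_ofReal_iff'.2 (le_max_iff.1 (hle x))
  refine ⟨M, hi, ?_⟩
  rw [integral_eq_lintegral_pos_part_sub_lintegral_neg_part hi, sub_neg]
  exact (ENNReal.toReal_lt_toReal (hpos.trans_lt hplus).ne hi.neg.lintegral_lt_top.ne).2
    (hpos.trans_lt hM)

end TruncLog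

/-- The hypothesis `𝔼 log α < 0` is encoded as: either `α` vanishes on a set of positive
measure (so `𝔼 log α = -∞`), or `𝔼 (log α)⁺ < 𝔼 (log α)⁻`. -/
theorem ergodic_weighted_series_summable
    {Ω : Type*} [MeasurableSpace Ω] (μ : Measure Ω) [IsProbabilityMeasure μ]
    (T : Ω → Ω) (hT : Ergodic T μ)
    (α β : Ω → ℝ) (hαmeas : Measurable α) (hβmeas : Measurable β)
    (hα0 : ∀ ω, 0 ≤ α ω) (hβ0 : ∀ ω, 0 ≤ β ω)
    (hαplus : ∫⁻ ω, ENNReal.ofReal (Real.log (α ω)) ∂μ < ⊤)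
    (hαneg : μ {ω | α ω = 0} ≠ 0 ∨
      ∫⁻ ω, ENNReal.ofReal (Real.log (α ω)) ∂μ <
        ∫⁻ ω, ENNReal.ofReal (-Real.log (α ω)) ∂μ)
    (hβplus : ∫⁻ ω, ENNReal.ofReal (Real.log (β ω)) ∂μ < ⊤) :
    ∀ᵐ ω ∂μ,
      Summable (fun n : ℕ => (∏ k ∈ Finset.range n, α (T^[k] ω)) * β (T^[n] ω)) := by
  obtain ⟨M, hfi, hf⟩ := exists_integral_truncLog_neg hαmeas hαplus hαneg
  set f := fun ω => truncLog M (α ω)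
  set I := ∫ ω, f ω ∂μ
  set h := fun ω => max (Real.log (β ω)) 0
  have hhi : Integrable h μ := integrable_max_zero_of_lintegral_ofReal_lt_top
    (Real.measurable_log.comp hβmeas).aemeasurable hβplus
  filter_upwards [hT.ae_exists_birkhoffSum_le (hαmeas.truncLog M) hfi (c := 2 * I / 3)
      (by linarith),
    hT.ae_exists_apply_iterate_le ((Real.measurable_log.comp hβmeas).max measurable_const) hhi
      (ε := -I / 3) (by linarith)] with ω ⟨C, hC⟩ ⟨C', hC'⟩
  have hterm : ∀ n : ℕ, (∏ k ∈ Finset.range n, α (T^[k] ω)) * β (T^[n] ω) ≤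
      Real.exp (C + C') * Real.exp (I / 3) ^ n := fun n =>
    calc (∏ k ∈ Finset.range n, α (T^[k] ω)) * β (T^[n] ω)
        ≤ Real.exp (birkhoffSum T f n ω) * Real.exp (h (T^[n] ω)) :=
          mul_le_mul (prod_le_exp_birkhoffSum hα0 (fun _ => le_exp_truncLog _ _) n ω)
            ((Real.le_exp_log _).trans (Real.exp_le_exp.2 (le_max_left _ _))) (hβ0 _)
            (Real.exp_nonneg _)
      _ ≤ Real.exp (C + 2 * I / 3 * n) * Real.exp (C' + -I / 3 * n) := by
          gcongr
          exacts [hC n, hC' n]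
      _ = Real.exp (C + C') * Real.exp (I / 3) ^ n := by
          rw [← Real.exp_nat_mul, ← Real.exp_add, ← Real.exp_add]
          ring_nf
  exact .of_nonneg_of_le (fun n => mul_nonneg (Finset.prod_nonneg fun k _ => hα0 _) (hβ0 _)) hterm
    ((summable_geometric_of_lt_one (Real.exp_nonneg _)
      (Real.exp_lt_one_iff.2 (by linarith))).mul_left _)
end

section
/- Let (Z_n) be a branching process in a varying environment with P_n = m_0⋯m_{n−1} and W_n = Z_n/P_n, and assume m_k(2) = Σ_i i²·p_i(k) < ∞ for all k. Then for every n ≥ 1, 𝔼 W_n² = 1 + Σ_{k=0}^{n−1} (1/P_k)·(m_k(2)/m_k² − 1); consequently, the martingale (W_n) is bounded in L² if and only if the series Σ_{k=0}^∞ (1/P_k)·(m_k(2)/m_k² − 1) converges. -/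
/-!
Conditionally on `Z_n`, the next generation `Z_{n+1}` is a sum of `Z_n` independent copies of an
offspring variable of mean `m_n` and variance `σ_n² = m_n(2) - m_n² ≥ 0`, because `Z_n` depends
only on the generations before `n`. Hence `𝔼 Z_{n+1} = m_n 𝔼 Z_n = P_{n+1}` and
`𝔼 Z_{n+1}² = σ_n² 𝔼 Z_n + m_n² 𝔼 Z_n²`; dividing by `P_{n+1}² = m_n² P_n²` gives
`𝔼 W_{n+1}² = 𝔼 W_n² + σ_n² / (m_n² P_n)`. The increments are nonnegative, so `𝔼 W_n²` is
bounded exactly when the series converges.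

All moments are computed as lower Lebesgue integrals in `[0, ∞]`, so that no integrability has
to be established before the recursion is known.
-/

open MeasureTheory ProbabilityTheory Filter
open scoped ENNReal NNReal

noncomputable section

/-- A branching process in a varying environment: for each `n`, `p n` is an offspring
distribution on `ℕ` with finite positive mean; the offspring variables `X n i`
(`n ≥ 0`, `i ≥ 0`) are independent, `X n i` having distribution `p n`; and
`Z 0 = 1`, `Z (n+1) = Σ_{i < Z n} X n i`. -/
structure BPVE (Ω : Type*) [MeasurableSpace Ω] where
  μ : Measure Ω
  prob : IsProbabilityMeasure μ
  p : ℕ → ℕ → ℝ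
  p_nonneg : ∀ n i, 0 ≤ p n i
  p_sum : ∀ n, HasSum (p n) 1
  mean_summable : ∀ n, Summable fun i : ℕ => (i : ℝ) * p n i
  mean_pos : ∀ n, 0 < ∑' i : ℕ, (i : ℝ) * p n i
  X : ℕ → ℕ → Ω → ℕ
  X_meas : ∀ n i, Measurable (X n i)
  X_indep : iIndepFun (fun q : ℕ × ℕ => X q.1 q.2) μ
  X_dist : ∀ n i k, (μ {ω | X n i ω = k}).toReal = p n k
  Z : ℕ → Ω → ℕ
  Z_zero : ∀ ω, Z 0 ω = 1
  Z_succ : ∀ n ω, Z (n + 1) ω = ∑ i ∈ Finset.range (Z n ω), X n i ω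

namespace BPVE

variable {Ω : Type*} [MeasurableSpace Ω]

/-- The mean `m_n` of the `n`-th offspring distribution. -/
def m (b : BPVE Ω) (n : ℕ) : ℝ := ∑' i : ℕ, (i : ℝ) * b.p n i

/-- `P_n = m_0 ⋯ m_{n-1}`. -/
def P (b : BPVE Ω) (n : ℕ) : ℝ := ∏ k ∈ Finset.range n, b.m k

/-- The normalized population size `W_n = Z_n / P_n`. -/
def W (b : BPVE Ω) (n : ℕ) (ω : Ω) : ℝ := (b.Z n ω : ℝ) / b.P n

/-- The moment `m_n(r) = Σ_i i^r p_i(n)`, computed in `[0, ∞]` so that it is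
meaningful even when infinite. -/
def mom (b : BPVE Ω) (n : ℕ) (r : ℝ) : ℝ≥0∞ :=
  ∑' i : ℕ, (i : ℝ≥0∞) ^ r * ENNReal.ofReal (b.p n i)

end BPVE

/-- `log⁺ x = max (log x) 0`. -/
def logPlus (x : ℝ) : ℝ := max (Real.log x) 0

end

open Finset

section Generic

variable {Ω : Type*}

theorem lintegral_comp_eq_tsum [MeasurableSpace Ω] {μ : Measure Ω} {Y : Ω → ℕ}
    (hY : Measurable Y) (g : ℕ → ℝ≥0∞) :
    ∫⁻ ω, g (Y ω) ∂μ = ∑' k, g k * μ {ω | Y ω = k} := by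
  rw [← lintegral_map measurable_from_top hY, lintegral_countable']
  refine tsum_congr fun k => ?_
  rw [Measure.map_apply hY (measurableSet_singleton k)]
  rfl

theorem lintegral_ofReal_comp_eq_ofReal_tsum [MeasurableSpace Ω] {μ : Measure Ω}
    {Y : Ω → ℕ} (hY : Measurable Y) {p g : ℕ → ℝ}
    (hμ : ∀ k, μ {ω | Y ω = k} = ENNReal.ofReal (p k)) (hp : ∀ k, 0 ≤ p k)
    (hg : ∀ k, 0 ≤ g k) (hgp : Summable fun k => g k * p k) :
    ∫⁻ ω, ENNReal.ofReal (g (Y ω)) ∂μ = ENNReal.ofReal (∑' k, g k * p k) := by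
  rw [lintegral_comp_eq_tsum hY fun k => ENNReal.ofReal (g k),
    ENNReal.ofReal_tsum_of_nonneg (fun k => mul_nonneg (hg k) (hp k)) hgp]
  exact tsum_congr fun k => by rw [hμ, ENNReal.ofReal_mul (hg k)]

theorem Measurable.comp_nat_index {mΩ : MeasurableSpace Ω} {β : Type*} [MeasurableSpace β]
    {N : Ω → ℕ} {F : ℕ → Ω → β} (hN : Measurable N) (hF : ∀ k, Measurable (F k)) :
    Measurable fun ω => F (N ω) ω :=
  (measurable_from_prod_countable_left (f := fun q : Ω × ℕ => F q.2 q.1) hF).comp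
    (measurable_id.prodMk hN)

theorem lintegral_comp_eq_lintegral_lintegral_of_indep {m₁ m₂ mΩ : MeasurableSpace Ω}
    {μ : Measure Ω} (h₁ : m₁ ≤ mΩ) (h₂ : m₂ ≤ mΩ) (hind : Indep m₁ m₂ μ)
    {N : Ω → ℕ} (hN : Measurable[m₁] N) {F : ℕ → Ω → ℝ≥0∞} (hF : ∀ k, Measurable[m₂] (F k)) :
    ∫⁻ ω, F (N ω) ω ∂μ = ∫⁻ ω, (∫⁻ ω', F (N ω) ω' ∂μ) ∂μ := by
  have hlevel : ∀ k, MeasurableSet[m₁] {ω | N ω = k} := fun k => hN (measurableSet_singleton k)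
  have hsplit : ∀ ω, F (N ω) ω = ∑' k, {ω | N ω = k}.indicator 1 ω * F k ω := fun ω => by
    rw [tsum_eq_single (N ω) fun k hk => by simp [Ne.symm hk]]
    simp
  calc ∫⁻ ω, F (N ω) ω ∂μ
      = ∑' k, ∫⁻ ω, {ω | N ω = k}.indicator 1 ω * F k ω ∂μ := by
        rw [lintegral_congr hsplit,
          lintegral_tsum (f := fun k ω => {ω | N ω = k}.indicator 1 ω * F k ω) fun k =>
            ((measurable_one.indicator (h₁ _ (hlevel k))).mul
              ((hF k).mono h₂ le_rfl)).aemeasurable]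
    _ = ∑' k, (∫⁻ ω, F k ω ∂μ) * μ {ω | N ω = k} := by
        refine tsum_congr fun k => ?_
        rw [lintegral_mul_eq_lintegral_mul_lintegral_of_independent_measurableSpace h₁ h₂ hind
          ((@measurable_one ℝ≥0∞ Ω _ m₁ _).indicator (hlevel k)) (hF k),
          lintegral_indicator_one (h₁ _ (hlevel k)), mul_comm]
    _ = ∫⁻ ω, (∫⁻ ω', F (N ω) ω' ∂μ) ∂μ :=
        (lintegral_comp_eq_tsum (hN.mono h₁ le_rfl) fun k => ∫⁻ ω', F k ω' ∂μ).symm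

theorem lintegral_sq_finset_sum_of_indepFun [MeasurableSpace Ω] {μ : Measure Ω} {ι : Type*}
    {f : ι → Ω → ℝ≥0∞} (s : Finset ι) (hf : ∀ i, Measurable (f i))
    (hind : Pairwise fun i j => IndepFun (f i) (f j) μ) {a d : ℝ≥0∞}
    (h₁ : ∀ i, ∫⁻ ω, f i ω ∂μ = a) (h₂ : ∀ i, ∫⁻ ω, f i ω ^ 2 ∂μ = d + a ^ 2) :
    ∫⁻ ω, (∑ i ∈ s, f i ω) ^ 2 ∂μ = #s * d + #s ^ 2 * a ^ 2 := by
  classical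
  have hpair : ∀ i j, ∫⁻ ω, f i ω * f j ω ∂μ = a ^ 2 + if i = j then d else 0 := by
    intro i j
    by_cases hij : i = j
    · subst hij
      simp only [← sq, h₂, if_true, add_comm]
    · rw [lintegral_mul_eq_lintegral_mul_lintegral_of_indepFun'' (hf i).aemeasurable
        (hf j).aemeasurable (hind hij), h₁, h₁, if_neg hij, add_zero, sq]
  calc ∫⁻ ω, (∑ i ∈ s, f i ω) ^ 2 ∂μ
      = ∑ i ∈ s, ∑ j ∈ s, ∫⁻ ω, f i ω * f j ω ∂μ := by
        simp_rw [sq, sum_mul_sum]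
        rw [lintegral_finsetSum _ (f := fun i ω => ∑ j ∈ s, f i ω * f j ω)
          fun i _ => Finset.measurable_sum _ fun j _ => (hf i).mul (hf j)]
        exact sum_congr rfl fun i _ =>
          lintegral_finsetSum _ (f := fun j ω => f i ω * f j ω) fun j _ => (hf i).mul (hf j)
    _ = #s * d + #s ^ 2 * a ^ 2 := by
        simp only [hpair, sum_add_distrib, sum_ite_eq, sum_ite_mem, inter_self, sum_const,
          nsmul_eq_mul]
        ring

end Generic

theorem sq_le_of_hasSum_moments {p : ℕ → ℝ} {m v : ℝ} (hp : HasSum p 1)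
    (hm : HasSum (fun i : ℕ => (i : ℝ) * p i) m)
    (hv : HasSum (fun i : ℕ => (i : ℝ) ^ 2 * p i) v) (hp₀ : ∀ i, 0 ≤ p i) : m ^ 2 ≤ v := by
  have hvar : HasSum (fun i : ℕ => ((i : ℝ) - m) ^ 2 * p i) (v - 2 * m * m + m ^ 2 * 1) := by
    rw [show (fun i : ℕ => ((i : ℝ) - m) ^ 2 * p i)
        = fun i : ℕ => (i : ℝ) ^ 2 * p i - 2 * m * ((i : ℝ) * p i) + m ^ 2 * p i from
      funext fun i => by ring]
    exact (hv.sub (hm.mul_left (2 * m))).add (hp.mul_left (m ^ 2))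
  nlinarith [hvar.nonneg fun i => mul_nonneg (sq_nonneg _) (hp₀ i)]

theorem Monotone.exists_tendsto_iff_bddAbove {f : ℕ → ℝ} (hf : Monotone f) :
    (∃ l, Tendsto f atTop (nhds l)) ↔ BddAbove (Set.range f) :=
  ⟨fun ⟨_, hl⟩ => hl.bddAbove_range, fun h => ⟨_, tendsto_atTop_ciSup hf h⟩⟩

namespace BPVE

variable {Ω : Type*} [MeasurableSpace Ω] (b : BPVE Ω)

noncomputable section

/-- `m_n(2)`, valued in `ℝ` rather than in `[0, ∞]` like `mom`. -/
def m2 (n : ℕ) : ℝ := ∑' i : ℕ, (i : ℝ) ^ 2 * b.p n i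

/-- `𝔼 W_{k+1}² - 𝔼 W_k²`. -/
def secondMomentIncrement (k : ℕ) : ℝ := 1 / b.P k * (b.m2 k / b.m k ^ 2 - 1)

abbrev ℱ (n : ℕ) : MeasurableSpace Ω :=
  ⨆ q ∈ {q : ℕ × ℕ | q.1 < n}, MeasurableSpace.comap (b.X q.1 q.2) inferInstance

abbrev offspringAlgebra (n : ℕ) : MeasurableSpace Ω :=
  ⨆ q ∈ {q : ℕ × ℕ | q.1 = n}, MeasurableSpace.comap (b.X q.1 q.2) inferInstance

def offspringSum (n z : ℕ) (ω : Ω) : ℕ := ∑ i ∈ range z, b.X n i ω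

end

theorem m_pos (n : ℕ) : 0 < b.m n := b.mean_pos n

theorem P_pos (n : ℕ) : 0 < b.P n := prod_pos fun k _ => b.m_pos k

theorem P_succ (n : ℕ) : b.P (n + 1) = b.P n * b.m n := prod_range_succ _ n

theorem sq_m_le_m2 {n : ℕ} (h2 : Summable fun i : ℕ => (i : ℝ) ^ 2 * b.p n i) :
    b.m n ^ 2 ≤ b.m2 n :=
  sq_le_of_hasSum_moments (b.p_sum n) (b.mean_summable n).hasSum h2.hasSum (b.p_nonneg n)

theorem secondMomentIncrement_nonneg {k : ℕ}
    (h2 : Summable fun i : ℕ => (i : ℝ) ^ 2 * b.p k i) : 0 ≤ b.secondMomentIncrement k :=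
  mul_nonneg (one_div_nonneg.2 (b.P_pos k).le)
    (sub_nonneg.2 ((one_le_div (pow_pos (b.m_pos k) 2)).2 (b.sq_m_le_m2 h2)))

theorem one_add_sum_secondMomentIncrement_nonneg
    (hm2 : ∀ k, Summable fun i : ℕ => (i : ℝ) ^ 2 * b.p k i) (n : ℕ) :
    0 ≤ 1 + ∑ k ∈ range n, b.secondMomentIncrement k :=
  add_nonneg zero_le_one (sum_nonneg fun k _ => b.secondMomentIncrement_nonneg (hm2 k))

theorem sq_P_mul_one_add_sum_succ (n : ℕ) :
    b.P (n + 1) ^ 2 * (1 + ∑ k ∈ range (n + 1), b.secondMomentIncrement k)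
      = b.P n * (b.m2 n - b.m n ^ 2)
        + b.P n ^ 2 * (1 + ∑ k ∈ range n, b.secondMomentIncrement k) * b.m n ^ 2 := by
  have := b.P_pos n
  have := b.m_pos n
  rw [b.P_succ, sum_range_succ, secondMomentIncrement]
  field_simp
  ring

theorem measure_X_eq (n i k : ℕ) : b.μ {ω | b.X n i ω = k} = ENNReal.ofReal (b.p n k) := by
  have := b.prob
  rw [← b.X_dist n i k, ENNReal.ofReal_toReal (measure_ne_top _ _)]

theorem lintegral_X (n i : ℕ) : ∫⁻ ω, (b.X n i ω : ℝ≥0∞) ∂b.μ = ENNReal.ofReal (b.m n) := by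
  simpa [m] using lintegral_ofReal_comp_eq_ofReal_tsum (g := fun k => (k : ℝ)) (b.X_meas n i)
    (b.measure_X_eq n i) (b.p_nonneg n) (fun k => k.cast_nonneg) (b.mean_summable n)

theorem lintegral_X_sq {n : ℕ} (h2 : Summable fun i : ℕ => (i : ℝ) ^ 2 * b.p n i) (i : ℕ) :
    ∫⁻ ω, (b.X n i ω : ℝ≥0∞) ^ 2 ∂b.μ
      = ENNReal.ofReal (b.m2 n - b.m n ^ 2) + ENNReal.ofReal (b.m n) ^ 2 :=
  calc ∫⁻ ω, (b.X n i ω : ℝ≥0∞) ^ 2 ∂b.μ = ENNReal.ofReal (b.m2 n) := by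
        simpa [m2, ENNReal.ofReal_pow] using lintegral_ofReal_comp_eq_ofReal_tsum
          (g := fun k => (k : ℝ) ^ 2) (b.X_meas n i) (b.measure_X_eq n i) (b.p_nonneg n)
          (fun k => sq_nonneg _) h2
    _ = _ := by
        rw [← ENNReal.ofReal_pow (b.m_pos n).le,
          ← ENNReal.ofReal_add (sub_nonneg.2 (b.sq_m_le_m2 h2)) (sq_nonneg _), sub_add_cancel]

attribute [fun_prop] X_meas

theorem ℱ_le (n : ℕ) : b.ℱ n ≤ ‹MeasurableSpace Ω› :=
  iSup₂_le fun q _ => (b.X_meas q.1 q.2).comap_le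

theorem offspringAlgebra_le (n : ℕ) : b.offspringAlgebra n ≤ ‹MeasurableSpace Ω› :=
  iSup₂_le fun q _ => (b.X_meas q.1 q.2).comap_le

theorem indep_ℱ_offspringAlgebra (n : ℕ) : Indep (b.ℱ n) (b.offspringAlgebra n) b.μ :=
  indep_iSup_of_disjoint
    (m := fun q : ℕ × ℕ => MeasurableSpace.comap (b.X q.1 q.2) inferInstance)
    (fun q => (b.X_meas q.1 q.2).comap_le) b.X_indep.iIndep
    (Set.disjoint_left.2 fun q (hlt : q.1 < n) (heq : q.1 = n) => hlt.ne heq)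

theorem measurable_X_ℱ {n N : ℕ} (h : n < N) (i : ℕ) : Measurable[b.ℱ N] (b.X n i) :=
  Measurable.of_comap_le (le_biSup (fun q : ℕ × ℕ => MeasurableSpace.comap (b.X q.1 q.2) _)
    (show (n, i) ∈ {q : ℕ × ℕ | q.1 < N} from h))

theorem measurable_X_offspringAlgebra (n i : ℕ) :
    Measurable[b.offspringAlgebra n] (b.X n i) :=
  Measurable.of_comap_le (le_biSup (fun q : ℕ × ℕ => MeasurableSpace.comap (b.X q.1 q.2) _)
    (show (n, i) ∈ {q : ℕ × ℕ | q.1 = n} from rfl))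

theorem Z_succ_eq (n : ℕ) : b.Z (n + 1) = fun ω => b.offspringSum n (b.Z n ω) ω :=
  funext (b.Z_succ n)

theorem measurable_Z_ℱ (n : ℕ) : Measurable[b.ℱ n] (b.Z n) := by
  induction n with
  | zero =>
    rw [show b.Z 0 = fun _ => 1 from funext b.Z_zero]
    exact @measurable_const _ _ _ (b.ℱ 0) _
  | succ n ih =>
    rw [b.Z_succ_eq n]
    exact (ih.mono (biSup_mono fun q hq => Nat.lt_succ_of_lt hq) le_rfl).comp_nat_index
      fun z => Finset.measurable_sum _ fun i _ => b.measurable_X_ℱ (Nat.lt_succ_self n) i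

@[fun_prop]
theorem measurable_Z (n : ℕ) : Measurable (b.Z n) := (b.measurable_Z_ℱ n).mono (b.ℱ_le n) le_rfl

theorem lintegral_comp_Z_succ (n : ℕ) (g : ℕ → ℝ≥0∞) :
    ∫⁻ ω, g (b.Z (n + 1) ω) ∂b.μ
      = ∫⁻ ω, (∫⁻ ω', g (b.offspringSum n (b.Z n ω) ω') ∂b.μ) ∂b.μ := by
  rw [b.Z_succ_eq n]
  exact lintegral_comp_eq_lintegral_lintegral_of_indep (b.ℱ_le n) (b.offspringAlgebra_le n)
    (b.indep_ℱ_offspringAlgebra n) (b.measurable_Z_ℱ n) fun z => measurable_from_top.comp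
      (Finset.measurable_sum _ fun i _ => b.measurable_X_offspringAlgebra n i)

theorem coe_offspringSum (n z : ℕ) (ω : Ω) :
    (b.offspringSum n z ω : ℝ≥0∞) = ∑ i ∈ range z, (b.X n i ω : ℝ≥0∞) := by
  simp [offspringSum]

theorem lintegral_offspringSum (n z : ℕ) :
    ∫⁻ ω, (b.offspringSum n z ω : ℝ≥0∞) ∂b.μ = z * ENNReal.ofReal (b.m n) := by
  simp_rw [coe_offspringSum]
  rw [lintegral_finsetSum _ fun i _ => by fun_prop]
  simp [b.lintegral_X]

theorem lintegral_offspringSum_sq {n : ℕ} (h2 : Summable fun i : ℕ => (i : ℝ) ^ 2 * b.p n i)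
    (z : ℕ) : ∫⁻ ω, (b.offspringSum n z ω : ℝ≥0∞) ^ 2 ∂b.μ
      = z * ENNReal.ofReal (b.m2 n - b.m n ^ 2) + z ^ 2 * ENNReal.ofReal (b.m n) ^ 2 := by
  simp_rw [coe_offspringSum]
  simpa using lintegral_sq_finset_sum_of_indepFun (range z) (fun i => by fun_prop)
    (fun i j hij => (b.X_indep.indepFun (i := (n, i)) (j := (n, j)) (by simpa using hij)).comp
      measurable_from_top measurable_from_top)
    (b.lintegral_X n) (b.lintegral_X_sq h2)

theorem lintegral_Z (n : ℕ) : ∫⁻ ω, (b.Z n ω : ℝ≥0∞) ∂b.μ = ENNReal.ofReal (b.P n) := by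
  induction n with
  | zero => simp [b.Z_zero, P, b.prob.measure_univ]
  | succ n ih =>
    rw [b.lintegral_comp_Z_succ n Nat.cast]
    simp_rw [lintegral_offspringSum]
    rw [lintegral_mul_const _ (by fun_prop), ih, ← ENNReal.ofReal_mul (b.P_pos n).le, b.P_succ]

theorem lintegral_Z_sq (hm2 : ∀ k, Summable fun i : ℕ => (i : ℝ) ^ 2 * b.p k i) (n : ℕ) :
    ∫⁻ ω, (b.Z n ω : ℝ≥0∞) ^ 2 ∂b.μ
      = ENNReal.ofReal (b.P n ^ 2 * (1 + ∑ k ∈ range n, b.secondMomentIncrement k)) := by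
  induction n with
  | zero => simp [b.Z_zero, P, b.prob.measure_univ]
  | succ n ih =>
    have hsum := b.one_add_sum_secondMomentIncrement_nonneg hm2 n
    rw [b.lintegral_comp_Z_succ n (· ^ 2)]
    simp_rw [b.lintegral_offspringSum_sq (hm2 n)]
    rw [lintegral_add_left (by fun_prop), lintegral_mul_const _ (by fun_prop),
      lintegral_mul_const _ (by fun_prop), b.lintegral_Z, ih,
      ← ENNReal.ofReal_pow (b.m_pos n).le, ← ENNReal.ofReal_mul (b.P_pos n).le,
      ← ENNReal.ofReal_mul (by positivity),
      ← ENNReal.ofReal_add (mul_nonneg (b.P_pos n).le (sub_nonneg.2 (b.sq_m_le_m2 (hm2 n))))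
        (by positivity), b.sq_P_mul_one_add_sum_succ]

theorem integral_W_sq (hm2 : ∀ k, Summable fun i : ℕ => (i : ℝ) ^ 2 * b.p k i) (n : ℕ) :
    ∫ ω, b.W n ω ^ 2 ∂b.μ = 1 + ∑ k ∈ range n, b.secondMomentIncrement k := by
  have hZ_sq : ∫ ω, (b.Z n ω : ℝ) ^ 2 ∂b.μ
      = b.P n ^ 2 * (1 + ∑ k ∈ range n, b.secondMomentIncrement k) := by
    rw [integral_eq_lintegral_of_nonneg_ae (.of_forall fun ω => sq_nonneg _) (by fun_prop)]
    simp_rw [ENNReal.ofReal_pow (Nat.cast_nonneg _), ENNReal.ofReal_natCast]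
    rw [b.lintegral_Z_sq hm2, ENNReal.toReal_ofReal
      (mul_nonneg (sq_nonneg _) (b.one_add_sum_secondMomentIncrement_nonneg hm2 n))]
  simp_rw [W, div_pow]
  rw [integral_div, hZ_sq]
  field_simp [(b.P_pos n).ne']

end BPVE

/-- **Second moment identity (after Jagers).** For a branching process in a varying
environment with `m_k(2) < ∞` for all `k`, one has
`𝔼 W_n² = 1 + Σ_{k<n} (1/P_k)(m_k(2)/m_k² − 1)`; consequently `(W_n)` is bounded in
`L²` if and only if the series `Σ_k (1/P_k)(m_k(2)/m_k² − 1)` converges. -/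
theorem second_moment_identity
    {Ω : Type*} [MeasurableSpace Ω] (b : BPVE Ω)
    (hm2 : ∀ k, Summable fun i : ℕ => (i : ℝ) ^ 2 * b.p k i) :
    (∀ n : ℕ, 1 ≤ n →
      ∫ ω, b.W n ω ^ 2 ∂b.μ =
        1 + ∑ k ∈ Finset.range n,
          (1 / b.P k) * ((∑' i : ℕ, (i : ℝ) ^ 2 * b.p k i) / b.m k ^ 2 - 1)) ∧
    ((∃ C : ℝ, ∀ n : ℕ, ∫ ω, b.W n ω ^ 2 ∂b.μ ≤ C) ↔
      ∃ l : ℝ, Tendsto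
        (fun N : ℕ => ∑ k ∈ Finset.range N,
          (1 / b.P k) * ((∑' i : ℕ, (i : ℝ) ^ 2 * b.p k i) / b.m k ^ 2 - 1))
        atTop (nhds l)) := by
  have hW := b.integral_W_sq hm2
  have hmono : Monotone fun N => ∑ k ∈ range N, b.secondMomentIncrement k :=
    fun _ _ h => sum_le_sum_of_subset_of_nonneg (range_mono h)
      fun k _ _ => b.secondMomentIncrement_nonneg (hm2 k)
  refine ⟨fun n _ => hW n, ?_⟩
  simp only [hW]
  change _ ↔ ∃ l, Tendsto (fun N => ∑ k ∈ range N, b.secondMomentIncrement k) atTop (nhds l)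
  rw [hmono.exists_tendsto_iff_bddAbove]
  exact ⟨fun ⟨C, hC⟩ => ⟨C - 1, Set.forall_mem_range.2 fun n => by linarith [hC n]⟩,
    fun ⟨C, hC⟩ => ⟨1 + C, fun n => by linarith [hC ⟨n, rfl⟩]⟩⟩
end
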